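/- Let A > 2 and consider a four-body planar configuration in kite position: q_1 = (−x_2, 0), q_2 = (x_2, 0), q_3 = (0, y_3), q_4 = (0, y_4) with x_2 > 0, y_3 > y_4, the four points distinct, and positive masses m_1, m_2, m_3, m_4. If this configuration is a critical point of f = M I/2 + U/(A−2) (i.e., it is a central configuration), then m_1 = m_2. -/

import Mathlib

noncomputable section

open Finset

/-- A point in the Euclidean plane with the given coordinates. -/
def pt (a b : ℝ) : EuclideanSpace ℝ (Fin 2) := (WithLp.equiv 2 (Fin 2 → ℝ)).symm ![a, b]

/-- The configuration space of `n` planar points, identified with `ℝ^{2n}`. -/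
abbrev Conf (n : ℕ) := Fin n → EuclideanSpace ℝ (Fin 2)

/-- The twist vector `v_{i,j}`: its only nonzero components are
`(v_{i,j})_{x_i} = m_j (y_i - y_j)`, `(v_{i,j})_{y_i} = -m_j (x_i - x_j)`,
`(v_{i,j})_{x_j} = -m_i (y_i - y_j)`, `(v_{i,j})_{y_j} = m_i (x_i - x_j)`. -/
def twist {n : ℕ} (m : Fin n → ℝ) (q : Conf n) (i j : Fin n) : Conf n :=
  fun k =>
    if k = i then pt (m j * (q i 1 - q j 1)) (-(m j * (q i 0 - q j 0)))
    else if k = j then pt (-(m i * (q i 1 - q j 1))) (m i * (q i 0 - q j 0))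
    else 0

/-- The dot product on the configuration space `ℝ^{2n}`. -/
def dot {n : ℕ} (v w : Conf n) : ℝ := ∑ k, ∑ t, v k t * w k t

/-- Twice the signed area `Λ_{i,j,k}` of the triangle `q_i q_j q_k`. -/
def lam {n : ℕ} (q : Conf n) (i j k : Fin n) : ℝ :=
  (q i 0 - q j 0) * (q i 1 - q k 1) - (q i 0 - q k 0) * (q i 1 - q j 1)

/-- The moment of inertia about the center of mass. -/
def Ifun {n : ℕ} (m : Fin n → ℝ) (q : Conf n) : ℝ :=
  ∑ i, m i * ‖q i - (∑ i, m i)⁻¹ • ∑ j, m j • q j‖ ^ 2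

/-- The homogeneous potential `U = ∑_{i<j} m_i m_j r_{i,j}^{2-A}`. -/
def Ufun {n : ℕ} (A : ℝ) (m : Fin n → ℝ) (q : Conf n) : ℝ :=
  ∑ p ∈ Finset.univ.filter (fun p : Fin n × Fin n => p.1 < p.2),
    m p.1 * m p.2 * ‖q p.1 - q p.2‖ ^ (2 - A)

/-- `f = M I / 2 + U / (A - 2)`. -/
def fFun {n : ℕ} (A : ℝ) (m : Fin n → ℝ) (q : Conf n) : ℝ :=
  (∑ i, m i) * Ifun m q / 2 + Ufun A m q / (A - 2)

/-- The Hessian of `f` at `q`, as a bilinear form: `v ᵀ H w`. -/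
def hess {n : ℕ} (A : ℝ) (m : Fin n → ℝ) (q : Conf n) (v w : Conf n) : ℝ :=
  fderiv ℝ (fderiv ℝ (fFun A m)) q v w

/-! At a critical point of `f` the gradient of `f` with respect to each body vanishes, which gives
the central configuration equations `M (q_i - c) = Σ_k m_k r_{i,k}^{-A} (q_i - q_k)`. In a kite,
the `x`-components of these equations for `q₃` and `q₄` read
`(m₁ - m₂) x₂ (1 - r_{1,3}^{-A}) = 0` and `(m₁ - m₂) x₂ (1 - r_{1,4}^{-A}) = 0`, so `m₁ ≠ m₂`
would force `r_{1,3} = r_{1,4} = 1`; the `x`-equation for `q₁` then gives `r_{1,2} = 1` and the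
`y`-equation for `q₃` gives `r_{3,4} = 1`. All six mutual distances would be `1`, which is
impossible for four points of the plane. -/

open RealInnerProductSpace

theorem two_mul_sum_filter_lt {ι : Type*} [Fintype ι] [LinearOrder ι] (h : ι → ι → ℝ)
    (h_symm : ∀ j k, h j k = h k j) (h_diag : ∀ j, h j j = 0) :
    2 * ∑ p ∈ univ.filter (fun p : ι × ι => p.1 < p.2), h p.1 p.2 = ∑ j, ∑ k, h j k := by
  have h_swap : ∑ p : ι × ι, (if p.1 < p.2 then h p.1 p.2 else 0)
      = ∑ p : ι × ι, (if p.2 < p.1 then h p.1 p.2 else 0) :=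
    Fintype.sum_equiv (Equiv.prodComm ι ι) _ _ fun p => by rw [h_symm]; rfl
  rw [sum_filter, two_mul]
  nth_rw 2 [h_swap]
  rw [← sum_add_distrib, ← Fintype.sum_prod_type']
  refine Fintype.sum_congr _ _ fun p => ?_
  rcases lt_trichotomy p.1 p.2 with hlt | heq | hgt
  · simp [hlt, hlt.not_gt]
  · simp [heq, h_diag]
  · simp [hgt, hgt.not_gt]

theorem eq_one_of_rpow_eq_one {r p : ℝ} (hr : 0 ≤ r) (hp : p ≠ 0) (h : r ^ p = 1) : r = 1 :=
  (Real.rpow_left_inj hr zero_le_one hp).mp (h.trans (Real.one_rpow p).symm)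

section InnerProductSpace

variable {E : Type*} [NormedAddCommGroup E] [InnerProductSpace ℝ E]

theorem sum_filter_lt_inner_sub {ι : Type*} [Fintype ι] [LinearOrder ι] (a : ι → ι → ℝ)
    (ha : ∀ j k, a j k = a k j) (x v : ι → E) :
    ∑ p ∈ univ.filter (fun p : ι × ι => p.1 < p.2), a p.1 p.2 * ⟪x p.1 - x p.2, v p.1 - v p.2⟫
      = ∑ j, ⟪∑ k, a j k • (x j - x k), v j⟫ := by
  have h_half := two_mul_sum_filter_lt (fun j k => a j k * ⟪x j - x k, v j - v k⟫)
    (fun j k => by rw [ha, ← neg_sub (x j), ← neg_sub (v j), inner_neg_neg])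
    (fun j => by simp)
  have h_antisymm : ∑ j, ∑ k, a j k * ⟪x j - x k, v k⟫ = -∑ j, ∑ k, a j k * ⟪x j - x k, v j⟫ := by
    rw [sum_comm, ← sum_neg_distrib]
    refine sum_congr rfl fun j _ => ?_
    rw [← sum_neg_distrib]
    refine sum_congr rfl fun k _ => ?_
    rw [ha, ← neg_sub (x j), inner_neg_left, mul_neg]
  have h_full : ∑ j, ∑ k, a j k * ⟪x j - x k, v j - v k⟫
      = 2 * ∑ j, ∑ k, a j k * ⟪x j - x k, v j⟫ := by
    simp only [inner_sub_right, mul_sub, sum_sub_distrib, h_antisymm]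
    ring
  simp only [sum_inner, real_inner_smul_left]
  linarith

theorem hasDerivAt_norm_add_smul_sq (u w : E) :
    HasDerivAt (fun t : ℝ => ‖u + t • w‖ ^ 2) (2 * ⟪u, w⟫) 0 := by
  simpa using (((hasDerivAt_id (0 : ℝ)).smul_const w).const_add u).norm_sq

theorem hasDerivAt_norm_add_smul_rpow (p : ℝ) {u : E} (hu : u ≠ 0) (w : E) :
    HasDerivAt (fun t : ℝ => ‖u + t • w‖ ^ p) (p * ‖u‖ ^ (p - 2) * ⟪u, w⟫) 0 := by
  have h_pow : ∀ y : E, (‖y‖ ^ 2) ^ (p / 2) = ‖y‖ ^ p := fun y => by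
    rw [← Real.rpow_natCast, ← Real.rpow_mul (norm_nonneg _)]; congr 1; ring
  have h := (hasDerivAt_norm_add_smul_sq u w).rpow_const (p := p / 2)
    (Or.inl (by simpa using hu))
  simp only [h_pow, zero_smul, add_zero] at h
  convert h using 1
  rw [← Real.rpow_natCast, ← Real.rpow_mul (norm_nonneg _)]
  ring_nf

end InnerProductSpace

section CentralConfiguration

variable {n : ℕ} {A : ℝ} {m : Fin n → ℝ} {q : Conf n}

def fFunGrad (A : ℝ) (m : Fin n → ℝ) (q : Conf n) (j : Fin n) : EuclideanSpace ℝ (Fin 2) :=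
  m j • ((∑ i, m i) • q j - ∑ i, m i • q i) - ∑ k, (m j * m k * ‖q j - q k‖ ^ (-A)) • (q j - q k)

theorem mul_Ifun (hM : ∑ i, m i ≠ 0) :
    (∑ i, m i) * Ifun m q = (∑ i, m i) * ∑ i, m i * ‖q i‖ ^ 2 - ‖∑ i, m i • q i‖ ^ 2 := by
  rw [Ifun]
  set M := ∑ i, m i
  set S := ∑ i, m i • q i
  have h_cross : ∑ i, m i * ⟪q i, M⁻¹ • S⟫ = M⁻¹ * ‖S‖ ^ 2 := by
    rw [← real_inner_self_eq_norm_sq, ← real_inner_smul_right, sum_inner]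
    simp only [real_inner_smul_left]
  have h_center : ‖M⁻¹ • S‖ ^ 2 = M⁻¹ ^ 2 * ‖S‖ ^ 2 := by
    rw [norm_smul, mul_pow, Real.norm_eq_abs, sq_abs]
  simp only [norm_sub_sq_real, mul_add, mul_sub, sum_add_distrib, sum_sub_distrib,
    mul_left_comm _ (2 : ℝ), ← mul_sum, ← sum_mul, h_cross, h_center]
  field_simp
  ring

theorem differentiableAt_fFun (hq : Function.Injective q) : DifferentiableAt ℝ (fFun A m) q := by
  have h_eval : ∀ i, DifferentiableAt ℝ (fun q : Conf n => q i) q := fun i =>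
    (ContinuousLinearMap.proj (R := ℝ) (φ := fun _ : Fin n => EuclideanSpace ℝ (Fin 2))
      i).differentiableAt
  have hI : DifferentiableAt ℝ (Ifun m) q := by
    refine DifferentiableAt.fun_sum fun i _ => DifferentiableAt.const_mul ?_ _
    refine DifferentiableAt.norm_sq ℝ ((h_eval i).sub (DifferentiableAt.fun_const_smul ?_ _))
    exact DifferentiableAt.fun_sum fun j _ => (h_eval j).fun_const_smul (m j)
  have hU : DifferentiableAt ℝ (Ufun A m) q := by
    refine DifferentiableAt.fun_sum fun p hp => DifferentiableAt.const_mul ?_ _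
    have h_ne : q p.1 - q p.2 ≠ 0 := sub_ne_zero.mpr (hq.ne (mem_filter.mp hp).2.ne)
    exact (((h_eval p.1).sub (h_eval p.2)).norm ℝ h_ne).rpow_const
      (Or.inl (norm_ne_zero_iff.mpr h_ne))
  unfold fFun
  simp only [div_eq_mul_inv]
  exact ((hI.const_mul _).mul_const _).add (hU.mul_const _)

theorem hasDerivAt_mul_Ifun_add_smul (hM : ∑ i, m i ≠ 0) (v : Conf n) :
    HasDerivAt (fun t : ℝ => (∑ i, m i) * Ifun m (q + t • v))
      (2 * ∑ j, ⟪m j • ((∑ i, m i) • q j - ∑ i, m i • q i), v j⟫) 0 := by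
  set M := ∑ i, m i
  set S := ∑ i, m i • q i
  set Sv := ∑ i, m i • v i
  have h_sum : ∀ t : ℝ, ∑ i, m i • (q + t • v) i = S + t • Sv := fun t => by
    simp only [Pi.add_apply, Pi.smul_apply, smul_add, sum_add_distrib, S, Sv, smul_sum]
    simp only [smul_comm t]
  have h_eq : (fun t : ℝ => M * Ifun m (q + t • v))
      = fun t => M * ∑ i, m i * ‖q i + t • v i‖ ^ 2 - ‖S + t • Sv‖ ^ 2 :=
    funext fun t => (mul_Ifun hM).trans (by rw [h_sum]; rfl)
  rw [h_eq]
  refine (((HasDerivAt.fun_sum fun i _ =>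
    (hasDerivAt_norm_add_smul_sq _ _).const_mul (m i)).const_mul M).sub
      (hasDerivAt_norm_add_smul_sq _ _)).congr_deriv ?_
  simp only [Sv, inner_sum, mul_sum, ← sum_sub_distrib, real_inner_smul_left,
    real_inner_smul_right, inner_sub_left]
  exact sum_congr rfl fun i _ => by ring

theorem hasDerivAt_Ufun_add_smul (hq : Function.Injective q) (v : Conf n) :
    HasDerivAt (fun t : ℝ => Ufun A m (q + t • v))
      ((2 - A) * ∑ j, ⟪∑ k, (m j * m k * ‖q j - q k‖ ^ (-A)) • (q j - q k), v j⟫) 0 := by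
  have h_diff : ∀ (t : ℝ) (i j : Fin n),
      (q + t • v) i - (q + t • v) j = (q i - q j) + t • (v i - v j) :=
    fun t i j => by simp only [Pi.add_apply, Pi.smul_apply]; module
  unfold Ufun
  simp only [h_diff]
  refine (HasDerivAt.fun_sum fun p hp => ((hasDerivAt_norm_add_smul_rpow _
    (sub_ne_zero.mpr (hq.ne (mem_filter.mp hp).2.ne)) _).const_mul _)).congr_deriv ?_
  rw [← sum_filter_lt_inner_sub _ (fun j k => by rw [mul_comm (m j), norm_sub_rev]), mul_sum]
  refine sum_congr rfl fun p _ => ?_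
  rw [show 2 - A - 2 = -A by ring]
  ring

theorem hasDerivAt_fFun_add_smul (hA : A ≠ 2) (hM : ∑ i, m i ≠ 0) (hq : Function.Injective q)
    (v : Conf n) :
    HasDerivAt (fun t : ℝ => fFun A m (q + t • v)) (∑ j, ⟪fFunGrad A m q j, v j⟫) 0 := by
  refine (((hasDerivAt_mul_Ifun_add_smul hM v).div_const 2).add
    ((hasDerivAt_Ufun_add_smul hq v).div_const (A - 2))).congr_deriv ?_
  simp only [fFunGrad, inner_sub_left, sum_sub_distrib]
  field_simp [sub_ne_zero.mpr hA]
  ring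

theorem fFunGrad_eq_zero_of_fderiv_eq_zero (hA : A ≠ 2) (hM : ∑ i, m i ≠ 0)
    (hq : Function.Injective q) (hcrit : fderiv ℝ (fFun A m) q = 0) (j : Fin n) :
    fFunGrad A m q j = 0 := by
  set G := fFunGrad A m q
  -- Along the direction `G` itself the derivative of `f` is `∑ i, ‖G i‖²`.
  have h_flat : HasDerivAt (fun t : ℝ => fFun A m (q + t • G)) 0 0 := by
    have hF : HasFDerivAt (fFun A m) (0 : Conf n →L[ℝ] ℝ) q :=
      hcrit ▸ (differentiableAt_fFun hq).hasFDerivAt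
    have h := hF.comp_hasDerivAt_of_eq 0 (((hasDerivAt_id (0 : ℝ)).smul_const G).const_add q)
      (by simp)
    rwa [zero_apply] at h
  have h_sum : ∑ i, ⟪G i, G i⟫ = 0 := (hasDerivAt_fFun_add_smul hA hM hq G).unique h_flat
  exact inner_self_eq_zero.mp <|
    (sum_eq_zero_iff_of_nonneg fun i _ => real_inner_self_nonneg).mp h_sum j (mem_univ j)

theorem central_configuration_eq (hA : A ≠ 2) (hM : ∑ i, m i ≠ 0) (hq : Function.Injective q)
    (hcrit : fderiv ℝ (fFun A m) q = 0) {j : Fin n} (hmj : m j ≠ 0) :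
    (∑ i, m i) • q j - ∑ i, m i • q i = ∑ k, (m k * ‖q j - q k‖ ^ (-A)) • (q j - q k) := by
  have h := fFunGrad_eq_zero_of_fderiv_eq_zero hA hM hq hcrit j
  rw [fFunGrad, sub_eq_zero] at h
  refine smul_right_injective _ hmj (h.trans ?_)
  simp only [smul_sum, smul_smul, mul_assoc]

end CentralConfiguration

section Kite

@[simp] theorem pt_apply_zero (a b : ℝ) : pt a b 0 = a := rfl
@[simp] theorem pt_apply_one (a b : ℝ) : pt a b 1 = b := rfl

theorem norm_pt (a b : ℝ) : ‖pt a b‖ = √(a ^ 2 + b ^ 2) := by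
  simp [EuclideanSpace.norm_eq, pt, Fin.sum_univ_two, sq_abs]

theorem pt_sub_pt (a b c d : ℝ) : pt a b - pt c d = pt (a - c) (b - d) := by
  ext i; fin_cases i <;> simp [pt]

variable {A x₂ y₃ y₄ : ℝ} {m : Fin 4 → ℝ} {q : Conf 4}

theorem kite_rpow_distances_eq_one_of_mass_ne (hA : A ≠ 2) (hm : ∀ i, 0 < m i)
    (hx : 0 < x₂) (hy : y₄ < y₃) (hq0 : q 0 = pt (-x₂) 0) (hq1 : q 1 = pt x₂ 0)
    (hq2 : q 2 = pt 0 y₃) (hq3 : q 3 = pt 0 y₄) (hq : Function.Injective q)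
    (hcrit : fderiv ℝ (fFun A m) q = 0) (h01 : m 0 ≠ m 1) :
    ‖q 0 - q 1‖ ^ (-A) = 1 ∧ ‖q 0 - q 2‖ ^ (-A) = 1 ∧ ‖q 0 - q 3‖ ^ (-A) = 1 ∧
      ‖q 2 - q 3‖ ^ (-A) = 1 := by
  have hM : ∑ i, m i ≠ 0 := (sum_pos (fun i _ => hm i) univ_nonempty).ne'
  have hcc j := central_configuration_eq hA hM hq hcrit (hm j).ne'
  have h12 : ‖q 1 - q 2‖ = ‖q 0 - q 2‖ := by
    rw [hq0, hq1, hq2, pt_sub_pt, pt_sub_pt, norm_pt, norm_pt]; ring_nf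
  have h13 : ‖q 1 - q 3‖ = ‖q 0 - q 3‖ := by
    rw [hq0, hq1, hq3, pt_sub_pt, pt_sub_pt, norm_pt, norm_pt]; ring_nf
  have E0 := hcc 0
  have E2 := hcc 2
  have E3 := hcc 3
  simp only [Fin.sum_univ_four, sub_self, smul_zero, add_zero, zero_add] at E0 E2 E3
  rw [norm_sub_rev (q 2) (q 0), norm_sub_rev (q 2) (q 1), h12] at E2
  rw [norm_sub_rev (q 3) (q 0), norm_sub_rev (q 3) (q 1), norm_sub_rev (q 3) (q 2), h13] at E3
  generalize ‖q 0 - q 1‖ ^ (-A) = s₀₁ at E0 ⊢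
  generalize ‖q 0 - q 2‖ ^ (-A) = s₀₂ at E0 E2 ⊢
  generalize ‖q 0 - q 3‖ ^ (-A) = s₀₃ at E0 E3 ⊢
  generalize ‖q 2 - q 3‖ ^ (-A) = s₂₃ at E2 E3 ⊢
  rw [hq0, hq1, hq2, hq3] at E0 E2 E3
  have E0x := congrArg (· 0) E0
  have E2x := congrArg (· 0) E2
  have E2y := congrArg (· 1) E2
  have E3x := congrArg (· 0) E3
  simp only [PiLp.add_apply, PiLp.sub_apply, PiLp.smul_apply, smul_eq_mul, pt_apply_zero,
    pt_apply_one] at E0x E2x E2y E3x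
  have hmx : (m 0 - m 1) * x₂ ≠ 0 := mul_ne_zero (sub_ne_zero.mpr h01) hx.ne'
  have h₀₂ : s₀₂ = 1 := mul_left_cancel₀ hmx (by linear_combination -E2x)
  have h₀₃ : s₀₃ = 1 := mul_left_cancel₀ hmx (by linear_combination -E3x)
  have h₀₁ : s₀₁ = 1 :=
    mul_left_cancel₀ (mul_ne_zero (mul_ne_zero two_ne_zero (hm 1).ne') hx.ne')
      (by linear_combination E0x - m 2 * x₂ * h₀₂ - m 3 * x₂ * h₀₃)
  have h₂₃ : s₂₃ = 1 := mul_left_cancel₀ (mul_ne_zero (hm 3).ne' (sub_ne_zero.mpr hy.ne'))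
    (by linear_combination -E2y - (m 0 + m 1) * y₃ * h₀₂)
  exact ⟨h₀₁, h₀₂, h₀₃, h₂₃⟩

theorem kite_distances_eq_one_of_mass_ne (hA₂ : A ≠ 2) (hA₀ : A ≠ 0) (hm : ∀ i, 0 < m i)
    (hx : 0 < x₂) (hy : y₄ < y₃) (hq0 : q 0 = pt (-x₂) 0) (hq1 : q 1 = pt x₂ 0)
    (hq2 : q 2 = pt 0 y₃) (hq3 : q 3 = pt 0 y₄) (hq : Function.Injective q)
    (hcrit : fderiv ℝ (fFun A m) q = 0) (h01 : m 0 ≠ m 1) :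
    ‖q 0 - q 1‖ = 1 ∧ ‖q 0 - q 2‖ = 1 ∧ ‖q 0 - q 3‖ = 1 ∧ ‖q 2 - q 3‖ = 1 := by
  have h_unit {u : EuclideanSpace ℝ (Fin 2)} (hu : ‖u‖ ^ (-A) = 1) : ‖u‖ = 1 :=
    eq_one_of_rpow_eq_one (norm_nonneg u) (neg_ne_zero.mpr hA₀) hu
  obtain ⟨h₀₁, h₀₂, h₀₃, h₂₃⟩ :=
    kite_rpow_distances_eq_one_of_mass_ne hA₂ hm hx hy hq0 hq1 hq2 hq3 hq hcrit h01
  exact ⟨h_unit h₀₁, h_unit h₀₂, h_unit h₀₃, h_unit h₂₃⟩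

theorem kite_distances_not_all_one (hq0 : q 0 = pt (-x₂) 0) (hq1 : q 1 = pt x₂ 0)
    (hq2 : q 2 = pt 0 y₃) (hq3 : q 3 = pt 0 y₄) (h₀₁ : ‖q 0 - q 1‖ = 1) (h₀₂ : ‖q 0 - q 2‖ = 1)
    (h₀₃ : ‖q 0 - q 3‖ = 1) (h₂₃ : ‖q 2 - q 3‖ = 1) : False := by
  simp only [hq0, hq1, hq2, hq3, pt_sub_pt, norm_pt, Real.sqrt_eq_one] at h₀₁ h₀₂ h₀₃ h₂₃
  have hx : x₂ ^ 2 = 1 / 4 := by linear_combination h₀₁ / 4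
  have hy₃ : y₃ ^ 2 = 3 / 4 := by linear_combination h₀₂ - hx
  have hy₄ : y₄ ^ 2 = 3 / 4 := by linear_combination h₀₃ - hx
  have hy₃₄ : y₃ * y₄ = 1 / 4 := by linear_combination (hy₃ + hy₄ - h₂₃) / 2
  nlinarith [congrArg (· ^ 2) hy₃₄]

end Kite

/-- A four-body central configuration in kite position
`q₁ = (-x₂, 0)`, `q₂ = (x₂, 0)`, `q₃ = (0, y₃)`, `q₄ = (0, y₄)` with `x₂ > 0`,
`y₃ > y₄`, distinct points and positive masses, has `m₁ = m₂`. -/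
theorem kite_central_config_equal_masses (A : ℝ) (hA : 2 < A)
    (m : Fin 4 → ℝ) (hm : ∀ i, 0 < m i) (x₂ y₃ y₄ : ℝ)
    (hx : 0 < x₂) (hy : y₄ < y₃) (q : Conf 4)
    (hq0 : q 0 = pt (-x₂) 0) (hq1 : q 1 = pt x₂ 0)
    (hq2 : q 2 = pt 0 y₃) (hq3 : q 3 = pt 0 y₄)
    (hq : Function.Injective q)
    (hcrit : fderiv ℝ (fFun A m) q = 0) :
    m 0 = m 1 := by
  by_contra h01
  obtain ⟨h₀₁, h₀₂, h₀₃, h₂₃⟩ := kite_distances_eq_one_of_mass_ne (by linarith) (by linarith) hm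
    hx hy hq0 hq1 hq2 hq3 hq hcrit h01
  exact kite_distances_not_all_one hq0 hq1 hq2 hq3 h₀₁ h₀₂ h₀₃ h₂₃
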